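/- Let φ be any IFG_N-formula over σ and 𝔄 a σ-structure with universe A. Then ‖φ‖_𝔄 is a perfect double suit (i.e., ‖φ‖_𝔄 = (𝒫(V), 𝒫(^N A \ V)) for some team V) if and only if there exists a perfect IFG_N-formula ψ (one all of whose slash sets are ∅) such that ‖φ‖_𝔄 = ‖ψ‖_𝔄; that is, φ has the same meaning in 𝔄 as an ordinary first-order formula if and only if ‖φ‖_𝔄 is perfect. -/

import Mathlib

open FirstOrder

/-- A team: a set of valuations `Fin N → A`. -/
abbrev Team (A : Type*) (N : ℕ) := Set (Fin N → A)

/-- A pair of collections of teams. -/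
abbrev TPair (A : Type*) (N : ℕ) := Set (Team A N) × Set (Team A N)

/-- A suit: a nonempty collection of teams closed under subsets. -/
def IsSuit {A : Type*} {N : ℕ} (S : Set (Team A N)) : Prop :=
  S.Nonempty ∧ ∀ ⦃V V' : Team A N⦄, V ∈ S → V' ⊆ V → V' ∈ S

/-- A double suit: a pair of suits whose intersection is `{∅}`. -/
def IsDoubleSuit {A : Type*} {N : ℕ} (X : TPair A N) : Prop :=
  IsSuit X.1 ∧ IsSuit X.2 ∧ X.1 ∩ X.2 = {∅}

/-- The pair `(𝒫(V), 𝒫(^N A \ V))`. -/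
def perfPair {A : Type*} {N : ℕ} (V : Team A N) : TPair A N :=
  (Set.powerset V, Set.powerset Vᶜ)

/-- `a ≈_J b` : the valuations `a` and `b` agree outside of `J`. -/
def AgreeOutside {A : Type*} {N : ℕ} (J : Set (Fin N)) (a b : Fin N → A) : Prop :=
  ∀ i ∉ J, a i = b i

/-- `V = V₁ ∪_J V₂` : `V₁, V₂` form a `J`-saturated disjoint cover of `V`. -/
def CovJ {A : Type*} {N : ℕ} (J : Set (Fin N)) (V V₁ V₂ : Team A N) : Prop :=
  Disjoint V₁ V₂ ∧ V₁ ∪ V₂ = V ∧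
  (∀ a ∈ V₁, ∀ b ∈ V, AgreeOutside J a b → b ∈ V₁) ∧
  (∀ a ∈ V₂, ∀ b ∈ V, AgreeOutside J a b → b ∈ V₂)

/-- `f` is independent of `J` on `V`. -/
def IndepOn {A : Type*} {N : ℕ} (J : Set (Fin N)) (V : Team A N)
    (f : (Fin N → A) → A) : Prop :=
  ∀ a ∈ V, ∀ b ∈ V, AgreeOutside J a b → f a = f b

/-- The `n`-variation of `V` by `f`: `V(n:f) = {a(n:f(a)) : a ∈ V}`. -/
def varF {A : Type*} {N : ℕ} (V : Team A N) (n : Fin N) (f : (Fin N → A) → A) : Team A N :=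
  (fun a => Function.update a n (f a)) '' V

/-- `V(n:A) = {a(n:b) : a ∈ V, b ∈ A}`. -/
def varAll {A : Type*} {N : ℕ} (V : Team A N) (n : Fin N) : Team A N :=
  {c | ∃ a ∈ V, ∃ b : A, c = Function.update a n b}

/-- IFG_N-formulas over the signature `L`: atomic first-order formulas
(equalities and relations between terms in the variables `v_0, …, v_{N-1}`),
closed under `∼ψ`, `ψ₁ ∨_J ψ₂`, and `∃v_n/J ψ`. -/
inductive IFG (L : Language) (N : ℕ) : Type _
  | equal (t₁ t₂ : L.Term (Fin N)) : IFG L N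
  | rel {k : ℕ} (R : L.Relations k) (ts : Fin k → L.Term (Fin N)) : IFG L N
  | not (φ : IFG L N) : IFG L N
  | or (J : Set (Fin N)) (φ₁ φ₂ : IFG L N) : IFG L N
  | ex (n : Fin N) (J : Set (Fin N)) (φ : IFG L N) : IFG L N

/-- Hodges' trump semantics: `Sat A φ true V` means `𝔄 ⊨⁺ φ[V]` (`V` is a trump),
and `Sat A φ false W` means `𝔄 ⊨⁻ φ[W]` (`W` is a cotrump). -/
def Sat {L : Language} {N : ℕ} (A : Type*) [L.Structure A] :
    IFG L N → Bool → Team A N → Prop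
  | .equal t₁ t₂, true, V => ∀ a ∈ V, t₁.realize a = t₂.realize a
  | .equal t₁ t₂, false, W => ∀ a ∈ W, t₁.realize a ≠ t₂.realize a
  | .rel R ts, true, V => ∀ a ∈ V, Language.Structure.RelMap R (fun i => (ts i).realize a)
  | .rel R ts, false, W => ∀ a ∈ W, ¬ Language.Structure.RelMap R (fun i => (ts i).realize a)
  | .not φ, b, V => Sat A φ (!b) V
  | .or J φ₁ φ₂, true, V =>
      ∃ V₁ V₂, CovJ J V V₁ V₂ ∧ Sat A φ₁ true V₁ ∧ Sat A φ₂ true V₂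
  | .or _ φ₁ φ₂, false, W => Sat A φ₁ false W ∧ Sat A φ₂ false W
  | .ex n J φ, true, V =>
      ∃ f : (Fin N → A) → A, IndepOn J V f ∧ Sat A φ true (varF V n f)
  | .ex n _ φ, false, W => Sat A φ false (varAll W n)

/-- The meaning `‖φ‖_𝔄 = ({V : 𝔄 ⊨⁺ φ[V]}, {W : 𝔄 ⊨⁻ φ[W]})`. -/
def meaning {L : Language} {N : ℕ} (A : Type*) [L.Structure A] (φ : IFG L N) :
    TPair A N :=
  ({V | Sat A φ true V}, {W | Sat A φ false W})

/-- An IFG-formula is perfect if all of its slash sets are empty. -/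
def IFG.Perfect {L : Language} {N : ℕ} : IFG L N → Prop
  | .equal _ _ => True
  | .rel _ _ => True
  | .not φ => φ.Perfect
  | .or J φ₁ φ₂ => J = ∅ ∧ φ₁.Perfect ∧ φ₂.Perfect
  | .ex _ J φ => J = ∅ ∧ φ.Perfect

/-- The perfection `φ_∅` of `φ`: replace every slash set by `∅`. -/
def IFG.perfection {L : Language} {N : ℕ} : IFG L N → IFG L N
  | .equal t₁ t₂ => .equal t₁ t₂
  | .rel R ts => .rel R ts
  | .not φ => .not φ.perfection
  | .or _ φ₁ φ₂ => .or ∅ φ₁.perfection φ₂.perfection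
  | .ex n _ φ => .ex n ∅ φ.perfection

/-! Perfect formulas are flat: their trumps are exactly the teams of valuations satisfying them
in Tarski's sense, and their cotrumps the teams of valuations falsifying them, so the meaning of a
perfect formula is a perfect double suit. On the other hand, replacing all slash sets of `φ` by `∅` only
relaxes the constraints on covers and Skolem functions, so every trump (cotrump) of `φ` is one of its
perfection `φ_∅`. Two perfect double suits are comparable only if they are equal; hence if `‖φ‖` is
perfect, it equals `‖φ_∅‖`. -/

section

variable {L : Language} {N : ℕ} {A : Type*}

/-- Tarski satisfaction of an IFG-formula, ignoring its slash sets. -/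
def IFG.Realize [L.Structure A] : IFG L N → (Fin N → A) → Prop
  | .equal t₁ t₂, a => t₁.realize a = t₂.realize a
  | .rel R ts, a => Language.Structure.RelMap R (fun i => (ts i).realize a)
  | .not φ, a => ¬ φ.Realize a
  | .or _ φ₁ φ₂, a => φ₁.Realize a ∨ φ₂.Realize a
  | .ex n _ φ, a => ∃ b, φ.Realize (Function.update a n b)

section Teams

variable {J J' : Set (Fin N)} {V V₁ V₂ : Team A N}

theorem AgreeOutside.mono {a b : Fin N → A} (hJ : J ⊆ J') (h : AgreeOutside J a b) :
    AgreeOutside J' a b :=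
  fun i hi => h i fun hiJ => hi (hJ hiJ)

theorem AgreeOutside.eq_of_empty {a b : Fin N → A} (h : AgreeOutside ∅ a b) : a = b :=
  funext fun i => h i (Set.notMem_empty i)

theorem CovJ.mono (hJ : J' ⊆ J) (h : CovJ J V V₁ V₂) : CovJ J' V V₁ V₂ :=
  let ⟨hd, hu, h₁, h₂⟩ := h
  ⟨hd, hu, fun a ha b hb hab => h₁ a ha b hb (hab.mono hJ),
    fun a ha b hb hab => h₂ a ha b hb (hab.mono hJ)⟩

theorem IndepOn.mono {f : (Fin N → A) → A} (hJ : J' ⊆ J) (h : IndepOn J V f) :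
    IndepOn J' V f :=
  fun a ha b hb hab => h a ha b hb (hab.mono hJ)

theorem indepOn_empty (f : (Fin N → A) → A) : IndepOn ∅ V f :=
  fun _ _ _ _ hab => congrArg f hab.eq_of_empty

theorem covJ_empty_inter_diff (S : Team A N) : CovJ ∅ V (V ∩ S) (V \ S) :=
  ⟨Set.disjoint_sdiff_inter.symm, Set.inter_union_sdiff V S,
    fun _ ha _ _ hab => hab.eq_of_empty ▸ ha, fun _ ha _ _ hab => hab.eq_of_empty ▸ ha⟩

theorem exists_covJ_empty_iff (p q : (Fin N → A) → Prop) :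
    (∃ V₁ V₂, CovJ ∅ V V₁ V₂ ∧ (∀ a ∈ V₁, p a) ∧ ∀ a ∈ V₂, q a) ↔ ∀ a ∈ V, p a ∨ q a := by
  constructor
  · rintro ⟨V₁, V₂, ⟨-, rfl, -, -⟩, hp, hq⟩ a (ha | ha)
    exacts [.inl (hp a ha), .inr (hq a ha)]
  · intro h
    exact ⟨V ∩ {a | p a}, V \ {a | p a}, covJ_empty_inter_diff _, fun a ha => ha.2,
      fun a ha => (h a ha.1).resolve_left ha.2⟩

theorem exists_forall_mem_varF_iff (n : Fin N) (p : (Fin N → A) → Prop) :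
    (∃ f, ∀ c ∈ varF V n f, p c) ↔ ∀ a ∈ V, ∃ b, p (Function.update a n b) := by
  simp only [varF, Set.forall_mem_image]
  constructor
  · rintro ⟨f, hf⟩ a ha
    exact ⟨f a, hf ha⟩
  · intro h
    have : ∀ a, ∃ b, a ∈ V → p (Function.update a n b) := fun a =>
      (em (a ∈ V)).elim (fun ha => (h a ha).imp fun _ hb _ => hb) fun ha => ⟨a n, (absurd · ha)⟩
    choose f hf using this
    exact ⟨f, fun a ha => hf a ha⟩

theorem forall_mem_varAll_iff (n : Fin N) (p : (Fin N → A) → Prop) :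
    (∀ c ∈ varAll V n, p c) ↔ ∀ a ∈ V, ∀ b, p (Function.update a n b) := by
  simp only [varAll, Set.mem_ofPred_eq]
  exact ⟨fun h a ha b => h _ ⟨a, ha, b, rfl⟩, fun h _ ⟨a, ha, b, hc⟩ => hc ▸ h a ha b⟩

end Teams

theorem perfPair_le_perfPair_iff {V V' : Team A N} : perfPair V ≤ perfPair V' ↔ V = V' := by
  simp only [perfPair, Prod.mk_le_mk, Set.powerset_mono,
    Set.compl_subset_compl, Set.Subset.antisymm_iff]

variable [L.Structure A]

theorem IFG.perfection_perfect : ∀ φ : IFG L N, φ.perfection.Perfect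
  | .equal _ _ => trivial
  | .rel _ _ => trivial
  | .not φ => φ.perfection_perfect
  | .or _ φ₁ φ₂ => ⟨rfl, φ₁.perfection_perfect, φ₂.perfection_perfect⟩
  | .ex _ _ φ => ⟨rfl, φ.perfection_perfect⟩

theorem Sat.perfection {φ : IFG L N} {b : Bool} {V : Team A N} (h : Sat A φ b V) :
    Sat A φ.perfection b V := by
  induction φ generalizing b V with
  | equal | rel => exact h
  | not φ ih => exact ih h
  | or J φ₁ φ₂ ih₁ ih₂ =>
    cases b with
    | false => exact ⟨ih₁ h.1, ih₂ h.2⟩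
    | true =>
      obtain ⟨V₁, V₂, hcov, h₁, h₂⟩ := h
      exact ⟨V₁, V₂, hcov.mono (Set.empty_subset J), ih₁ h₁, ih₂ h₂⟩
  | ex n J φ ih =>
    cases b with
    | false => exact ih h
    | true =>
      obtain ⟨f, hf, h⟩ := h
      exact ⟨f, hf.mono (Set.empty_subset J), ih h⟩

theorem meaning_le_meaning_perfection (φ : IFG L N) : meaning A φ ≤ meaning A φ.perfection :=
  ⟨fun _ => Sat.perfection, fun _ => Sat.perfection⟩

theorem IFG.Perfect.sat_iff {ψ : IFG L N} (hψ : ψ.Perfect) (V : Team A N) :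
    (Sat A ψ true V ↔ ∀ a ∈ V, ψ.Realize a) ∧ (Sat A ψ false V ↔ ∀ a ∈ V, ¬ ψ.Realize a) := by
  induction ψ generalizing V with
  | equal | rel => exact ⟨Iff.rfl, Iff.rfl⟩
  | not φ ih =>
    simp only [Sat, IFG.Realize, Bool.not_true, Bool.not_false, not_not]
    exact (ih hψ V).symm
  | or J φ₁ φ₂ ih₁ ih₂ =>
    obtain ⟨rfl, hψ₁, hψ₂⟩ := hψ
    simp only [Sat, IFG.Realize, fun V => (ih₁ hψ₁ V).1, fun V => (ih₂ hψ₂ V).1,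
      (ih₁ hψ₁ V).2, (ih₂ hψ₂ V).2, exists_covJ_empty_iff, not_or]
    exact ⟨trivial, forall₂_and.symm⟩
  | ex n J φ ih =>
    obtain ⟨rfl, hφ⟩ := hψ
    simp only [Sat, IFG.Realize, indepOn_empty, true_and, (ih hφ _).1, (ih hφ _).2,
      exists_forall_mem_varF_iff, forall_mem_varAll_iff, not_exists]

theorem IFG.Perfect.meaning_eq {ψ : IFG L N} (hψ : ψ.Perfect) :
    meaning A ψ = perfPair {a | ψ.Realize a} := by
  ext V <;> simp only [meaning, perfPair, Set.mem_ofPred_eq, Set.mem_powerset_iff]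
  · exact (hψ.sat_iff V).1
  · exact (hψ.sat_iff V).2

end

/-- `‖φ‖_𝔄` is a perfect double suit iff `φ` has the same meaning in `𝔄` as
some perfect IFG-formula (i.e., an ordinary first-order formula). -/
theorem perfect_meaning_iff_firstOrder {L : Language} {N : ℕ} (A : Type*)
    [L.Structure A] (φ : IFG L N) :
    (∃ V : Team A N, meaning A φ = perfPair V) ↔
    (∃ ψ : IFG L N, ψ.Perfect ∧ meaning A φ = meaning A ψ) := by
  constructor
  · rintro ⟨V, hV⟩
    refine ⟨φ.perfection, φ.perfection_perfect, ?_⟩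
    have hle := meaning_le_meaning_perfection (A := A) φ
    rw [hV, φ.perfection_perfect.meaning_eq, perfPair_le_perfPair_iff] at hle
    rw [hV, φ.perfection_perfect.meaning_eq, hle]
  · rintro ⟨ψ, hψ, hφψ⟩
    exact ⟨_, hφψ.trans hψ.meaning_eq⟩
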